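/- arXiv:2504.06506 — 2 statements merged into one kernel-verified Lean document; each statement's English description precedes it below -/
import Mathlib

section
/- Let P be a polynomial of odd degree m = 2k − 1 (k ≥ 1) with real coefficients, positive leading coefficient, and m distinct real roots, regarded as a polynomial over ℂ. Then there exists ε₀ > 0 such that for all ε ∈ (0, ε₀): the polynomial P − iε has exactly k roots, counted with multiplicity, in the open upper half-plane ℂ₊ and exactly k − 1 roots in the open lower half-plane ℂ₋, all simple; and the polynomial P + iε has exactly k − 1 roots in ℂ₊ and exactly k roots in ℂ₋, all simple. -/
open Polynomial

noncomputable section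

/-- The number of roots (counted with multiplicity) of `Q` in the open upper half-plane
`ℂ₊ = {z : ℂ | 0 < Im z}`. -/
def countUpper (Q : Polynomial ℂ) : ℕ := (Q.roots.filter fun z => 0 < z.im).card

/-- The number of roots (counted with multiplicity) of `Q` in the open lower half-plane
`ℂ₋ = {z : ℂ | Im z < 0}`. -/
def countLower (Q : Polynomial ℂ) : ℕ := (Q.roots.filter fun z => z.im < 0).card

/-- All roots of `Q` are simple (multiplicity one). -/
def allSimpleRoots (Q : Polynomial ℂ) : Prop := ∀ z ∈ Q.roots, Q.rootMultiplicity z = 1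

lemma card_range_even (k : ℕ) : ((Finset.range (2*k)).filter (fun j => Even j)).card = k := by
  induction k with
  | zero => simp
  | succ n ih =>
    have h2 : 2*(n+1) = (2*n)+1+1 := by ring
    rw [h2, Finset.range_add_one, Finset.range_add_one, Finset.filter_insert, Finset.filter_insert]
    have h3 : ¬ Even (2*n+1) := by simp [Nat.even_add_one]
    have h4 : Even (2*n) := even_two_mul n
    rw [if_neg h3, if_pos h4, Finset.card_insert_of_notMem (by simp)]
    omega

lemma card_range_even' (k : ℕ) (hk : 1 ≤ k) :
    ((Finset.range (2*k-1)).filter (fun j => Even j)).card = k := by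
  have h1 : 2*k = (2*k-1) + 1 := by omega
  have := card_range_even k
  rw [h1, Finset.range_add_one, Finset.filter_insert] at this
  have h3 : ¬ Even (2*k-1) := by
    rcases Nat.exists_eq_add_of_le hk with ⟨j, rfl⟩
    have : 2*(1+j)-1 = 2*j+1 := by omega
    rw [this]
    simp [Nat.even_add_one, parity_simps]
  rwa [if_neg h3] at this

lemma prod_pos_iff_even {ι : Type*} (s : Finset ι) (f : ι → ℝ) (hf : ∀ i ∈ s, f i ≠ 0) :
    (0 < ∏ i ∈ s, f i ↔ Even (s.filter (fun i => f i < 0)).card) := by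
  classical
  induction s using Finset.induction with
  | empty => simp
  | insert a s ha ih =>
    have hfa : f a ≠ 0 := hf a (Finset.mem_insert_self a s)
    have hf' : ∀ i ∈ s, f i ≠ 0 := fun i hi => hf i (Finset.mem_insert_of_mem hi)
    have hprod : ∏ i ∈ s, f i ≠ 0 := Finset.prod_ne_zero_iff.2 hf'
    rw [Finset.prod_insert ha, Finset.filter_insert]
    rcases hfa.lt_or_gt with hneg | hpos
    · rw [if_pos hneg, Finset.card_insert_of_notMem (by simp [ha]), Nat.even_add_one, ← ih hf']
      constructor
      · intro h hp
        nlinarith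
      · intro h
        rcases hprod.lt_or_gt with h2 | h2
        · nlinarith
        · exact absurd h2 h
    · rw [if_neg (by linarith), ← ih hf']
      constructor
      · intro h; nlinarith
      · intro h; exact mul_pos hpos h

lemma exists_root_closedBall (Q : Polynomial ℂ) (z₀ : ℂ) (δ : ℝ) (hδ : 0 < δ) (C : ℝ)
    (hcenter : ‖Q.eval z₀‖ < C) (hbound : ∀ z ∈ Metric.sphere z₀ δ, C ≤ ‖Q.eval z‖) :
    ∃ z ∈ Metric.closedBall z₀ δ, Q.eval z = 0 := by
  by_contra hcon
  push_neg at hcon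
  have hC : 0 < C := lt_of_le_of_lt (norm_nonneg _) hcenter
  have hd : DiffContOnCl ℂ (fun z => (Q.eval z)⁻¹) (Metric.ball z₀ δ) := by
    apply DifferentiableOn.diffContOnCl
    rw [closure_ball z₀ hδ.ne']
    intro z hz
    exact ((Q.differentiableAt).inv (hcon z hz)).differentiableWithinAt
  have key : ‖(Q.eval z₀)⁻¹‖ ≤ C⁻¹ := by
    apply Complex.norm_le_of_forall_mem_frontier_norm_le Metric.isBounded_ball hd
    · intro z hz
      rw [frontier_ball z₀ hδ.ne'] at hz
      rw [norm_inv]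
      exact inv_anti₀ hC (hbound z hz)
    · rw [closure_ball z₀ hδ.ne']
      exact Metric.mem_closedBall_self hδ.le
  have h0 : Q.eval z₀ ≠ 0 := hcon z₀ (Metric.mem_closedBall_self hδ.le)
  rw [norm_inv] at key
  have : C ≤ ‖Q.eval z₀‖ := by
    have h1 : 0 < ‖Q.eval z₀‖ := norm_pos_iff.2 h0
    rwa [inv_le_inv₀ h1 hC] at key
  linarith

lemma core (P : Polynomial ℝ) (k : ℕ) (hk : 1 ≤ k)
    (hdeg : P.natDegree = 2 * k - 1) (hlead : 0 < P.leadingCoeff)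
    (hcard : P.roots.card = 2 * k - 1) (hnodup : P.roots.Nodup) :
    ∃ ε₀ : ℝ, 0 < ε₀ ∧ ∀ ε : ℝ, 0 < ε → ε < ε₀ →
      countUpper (P.map (algebraMap ℝ ℂ) - C ((ε : ℂ) * Complex.I)) = k ∧
      countLower (P.map (algebraMap ℝ ℂ) - C ((ε : ℂ) * Complex.I)) = k - 1 ∧
      allSimpleRoots (P.map (algebraMap ℝ ℂ) - C ((ε : ℂ) * Complex.I)) ∧
      (P.map (algebraMap ℝ ℂ) - C ((ε : ℂ) * Complex.I)).roots.Nodup := by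
  classical
  set m := 2 * k - 1 with hm'
  have hm : 1 ≤ m := by omega
  have hP0 : P ≠ 0 := fun h => by simp [h] at hlead
  have hc0 : P.leadingCoeff ≠ 0 := ne_of_gt hlead
  have hsplits : P.Splits := splits_iff_card_roots.mpr (by rw [hcard, hdeg])
  set c := P.leadingCoeff with hc'
  set Pc := P.map (algebraMap ℝ ℂ) with hPc'
  set T : Finset ℝ := P.roots.toFinset with hT'
  have hTval : T.val = P.roots := by
    rw [hT', Multiset.toFinset_val, Multiset.dedup_eq_self.mpr hnodup]
  have hTcard : T.card = m := by rw [Finset.card_def, hTval, hcard]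
  have hfacC : Pc = C ((c : ℝ) : ℂ) * (P.roots.map fun a => X - C ((a : ℝ) : ℂ)).prod := by
    conv_lhs => rw [hPc', hsplits.eq_prod_roots]
    rw [Polynomial.map_mul, Polynomial.map_C, Polynomial.map_multiset_prod, Multiset.map_map]
    simp [Function.comp_def, hc']
  have hEval : ∀ z : ℂ, Pc.eval z = (c : ℂ) * ∏ r ∈ T, (z - (r : ℂ)) := by
    intro z
    rw [hfacC, eval_mul, eval_C, eval_multiset_prod]
    congr 1
    rw [Finset.prod_eq_multiset_prod, hTval, Multiset.map_map]
    apply congrArg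
    apply Multiset.map_congr rfl
    intro a _
    simp
  set W : ℝ → ℂ → ℂ := fun r z => ((c : ℝ) : ℂ) * ∏ l ∈ T.erase r, (z - (l : ℂ)) with hW'
  set wr : ℝ → ℝ := fun r => c * ∏ l ∈ T.erase r, (r - l) with hwr'
  have hwr0 : ∀ r : ℝ, wr r ≠ 0 := by
    intro r
    refine mul_ne_zero hc0 (Finset.prod_ne_zero_iff.mpr ?_)
    intro l hl h
    exact (Finset.mem_erase.mp hl).1 (by linarith [sub_eq_zero.mp h])
  have hWr : ∀ r : ℝ, W r (r : ℂ) = ((wr r : ℝ) : ℂ) := by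
    intro r
    simp only [hW', hwr']
    push_cast
    rfl
  have hcont : ∀ r : ℝ, ∃ d : ℝ, 0 < d ∧ ∀ z : ℂ, ‖z - (r : ℂ)‖ < d →
      ‖W r z - ((wr r : ℝ) : ℂ)‖ < |wr r| := by
    intro r
    have hWc : Continuous (W r) := by
      simp only [hW']
      exact continuous_const.mul
        (continuous_finset_prod _ fun l _ => (continuous_id.sub continuous_const))
    have h1 : 0 < |wr r| := abs_pos.mpr (hwr0 r)
    obtain ⟨dd, hdd, hball⟩ := Metric.continuousAt_iff.mp hWc.continuousAt |wr r| h1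
    refine ⟨dd, hdd, fun z hz => ?_⟩
    have h2 := hball (x := z) (by rwa [dist_eq_norm])
    rwa [dist_eq_norm, hWr r] at h2
  choose d hd0 hdb using hcont
  obtain ⟨g, hg0, hgle⟩ : ∃ g : ℝ, 0 < g ∧ ∀ a ∈ T, ∀ b ∈ T, a ≠ b → g ≤ |a - b| := by
    set S := ((T ×ˢ T).filter fun p => p.1 ≠ p.2).image fun p => |p.1 - p.2| with hS'
    refine ⟨(insert 1 S).min' (Finset.insert_nonempty _ _), ?_, ?_⟩
    · rcases Finset.mem_insert.mp ((insert 1 S).min'_mem (Finset.insert_nonempty _ _)) with h | h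
      · rw [h]; norm_num
      · obtain ⟨p, hp, hpe⟩ := Finset.mem_image.mp h
        have hne := (Finset.mem_filter.mp hp).2
        rw [← hpe]
        exact abs_pos.mpr (sub_ne_zero.mpr hne)
    · intro a ha b hb hab
      exact Finset.min'_le _ _ (Finset.mem_insert_of_mem (Finset.mem_image.mpr
        ⟨(a, b), Finset.mem_filter.mpr ⟨Finset.mem_product.mpr ⟨ha, hb⟩, hab⟩, rfl⟩))
  set D : Finset ℝ := insert (g / 3) (T.image d) with hD'
  set δ := D.min' (Finset.insert_nonempty _ _) with hδ'
  have hδg : δ ≤ g / 3 := Finset.min'_le _ _ (Finset.mem_insert_self _ _)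
  have hδd : ∀ r ∈ T, δ ≤ d r := fun r hr =>
    Finset.min'_le _ _ (Finset.mem_insert_of_mem (Finset.mem_image_of_mem d hr))
  have hδ0 : 0 < δ := by
    rcases Finset.mem_insert.mp (D.min'_mem (Finset.insert_nonempty _ _)) with h | h
    · rw [hδ', h]; linarith
    · obtain ⟨r, _, heq⟩ := Finset.mem_image.mp h
      rw [hδ', ← heq]; exact hd0 r
  have hPc0 : Pc ≠ 0 := by rw [hPc']; exact Polynomial.map_ne_zero hP0
  have hPcdeg : Pc.natDegree = m := by rw [hPc', natDegree_map, hdeg]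
  have hder0 : Pc.derivative ≠ 0 := by
    intro h
    have h2 := natDegree_eq_zero_of_derivative_eq_zero h
    omega
  have hsep : Pc.Separable := by
    rw [hPc']
    exact ((nodup_roots_iff_of_splits hP0 hsplits).mp hnodup).map
  have hcop : ∀ z : ℂ, Pc.derivative.eval z = 0 → Pc.eval z ≠ 0 := by
    intro z hz hPz
    obtain ⟨a, b, hab⟩ := hsep
    have h1 := congrArg (Polynomial.eval z) hab
    simp [hz, hPz] at h1
  set Sd : Finset ℂ := Pc.derivative.roots.toFinset with hSd'
  set ρ := (insert (1:ℝ) (Sd.image fun z => ‖Pc.eval z‖)).min' (Finset.insert_nonempty _ _) with hρ'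
  have hρ0 : 0 < ρ := by
    rcases Finset.mem_insert.mp ((insert (1:ℝ) (Sd.image fun z => ‖Pc.eval z‖)).min'_mem
      (Finset.insert_nonempty _ _)) with h | h
    · rw [hρ', h]; norm_num
    · obtain ⟨z, hz, heq⟩ := Finset.mem_image.mp h
      have hz2 : Pc.derivative.eval z = 0 := (mem_roots hder0).mp (Multiset.mem_toFinset.mp hz)
      rw [hρ', ← heq]
      exact norm_pos_iff.mpr (hcop z hz2)
  have hρle : ∀ z : ℂ, Pc.derivative.eval z = 0 → ρ ≤ ‖Pc.eval z‖ := by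
    intro z hz
    exact Finset.min'_le _ _ (Finset.mem_insert_of_mem (Finset.mem_image_of_mem _
      (Multiset.mem_toFinset.mpr ((mem_roots hder0).mpr hz))))
  have hcδ : 0 < c * δ ^ m / 2 := by positivity
  refine ⟨min (c * δ ^ m / 2) ρ, lt_min hcδ hρ0, fun ε hε0 hεa => ?_⟩
  have hε1 : ε < c * δ ^ m / 2 := lt_of_lt_of_le hεa (min_le_left _ _)
  have hε2 : ε < ρ := lt_of_lt_of_le hεa (min_le_right _ _)
  set Q := Pc - C ((ε : ℂ) * Complex.I) with hQ'
  have hQdeg : Q.natDegree = m := by rw [hQ', natDegree_sub_C, hPcdeg]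
  have hQ0 : Q ≠ 0 := by
    intro h
    rw [h] at hQdeg
    simp at hQdeg
    omega
  have hQeval : ∀ z : ℂ, Q.eval z = Pc.eval z - (ε : ℂ) * Complex.I := by
    intro z; simp [hQ']
  have hεI : ((ε : ℂ) * Complex.I) ≠ 0 :=
    mul_ne_zero (by exact_mod_cast hε0.ne') Complex.I_ne_zero
  have hεInorm : ‖(ε : ℂ) * Complex.I‖ = ε := by
    simp [norm_mul, Real.norm_eq_abs, abs_of_pos hε0]
  have hQroot : ∀ z : ℂ, z ∈ Q.roots ↔ Pc.eval z = (ε : ℂ) * Complex.I := by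
    intro z
    rw [mem_roots hQ0, IsRoot.def, hQeval, sub_eq_zero]
  have hprodbound : ∀ z : ℂ, (∀ r ∈ T, δ ≤ ‖z - (r : ℂ)‖) → c * δ ^ m ≤ ‖Pc.eval z‖ := by
    intro z hz
    rw [hEval z, norm_mul, Complex.norm_real, Real.norm_eq_abs, abs_of_pos hlead, norm_prod]
    apply mul_le_mul_of_nonneg_left _ hlead.le
    calc δ ^ m = ∏ _r ∈ T, δ := by rw [Finset.prod_const, hTcard]
    _ ≤ ∏ r ∈ T, ‖z - (r : ℂ)‖ := Finset.prod_le_prod (fun _ _ => hδ0.le) hz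
  have hloc : ∀ z : ℂ, Pc.eval z = (ε : ℂ) * Complex.I → ∃ r ∈ T, ‖z - (r : ℂ)‖ < δ := by
    intro z hz
    by_contra hcon
    push_neg at hcon
    have h1 := hprodbound z hcon
    rw [hz, hεInorm] at h1
    linarith
  have hRnorm : ∀ a b : ℝ, ‖(a : ℂ) - (b : ℂ)‖ = |a - b| := by
    intro a b; rw [← Complex.ofReal_sub, Complex.norm_real, Real.norm_eq_abs]
  have huniq : ∀ z : ℂ, ∀ r1 ∈ T, ∀ r2 ∈ T, ‖z - (r1 : ℂ)‖ < δ → ‖z - (r2 : ℂ)‖ ≤ δ → r1 = r2 := by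
    intro z r1 h1 r2 h2 hz1 hz2
    by_contra hne
    have h3 := hgle r1 h1 r2 h2 hne
    have h4 : ‖(r1 : ℂ) - (r2 : ℂ)‖ ≤ ‖z - (r1 : ℂ)‖ + ‖z - (r2 : ℂ)‖ := by
      calc ‖(r1:ℂ) - (r2:ℂ)‖ = ‖(z - (r2:ℂ)) - (z - (r1:ℂ))‖ := by congr 1; ring
      _ ≤ ‖z - (r2:ℂ)‖ + ‖z - (r1:ℂ)‖ := norm_sub_le _ _
      _ = _ := add_comm _ _
    rw [hRnorm] at h4
    linarith
  have hsign : ∀ z : ℂ, Pc.eval z = (ε : ℂ) * Complex.I → ∀ r, r ∈ T → ‖z - (r : ℂ)‖ < δ →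
      ((0 < z.im ↔ 0 < wr r) ∧ z.im ≠ 0) := by
    intro z hz r hr hzr
    have hfact : (z - (r : ℂ)) * W r z = (ε : ℂ) * Complex.I := by
      rw [← hz, hEval z, hW']
      rw [← Finset.mul_prod_erase T _ hr]
      ring
    have hWne : W r z ≠ 0 := by
      intro h
      rw [h, mul_zero] at hfact
      exact hεI hfact.symm
    have hsub : z - (r : ℂ) = ((ε : ℂ) * Complex.I) / W r z := (eq_div_iff hWne).mpr hfact
    have him : z.im = ε * (W r z).re / Complex.normSq (W r z) := by
      have h1 : z.im = (z - (r : ℂ)).im := by simp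
      rw [h1, hsub, Complex.div_im]
      simp [Complex.mul_im, Complex.mul_re]
    have hRe : |(W r z).re - wr r| < |wr r| := by
      have h1 := hdb r z (lt_of_lt_of_le hzr (hδd r hr))
      calc |(W r z).re - wr r| = |(W r z - ((wr r : ℝ) : ℂ)).re| := by simp
      _ ≤ ‖W r z - ((wr r : ℝ) : ℂ)‖ := by
        exact Complex.abs_re_le_norm _
      _ < |wr r| := h1
    have hNS : 0 < Complex.normSq (W r z) := Complex.normSq_pos.mpr hWne
    obtain ⟨hRe1, hRe2⟩ := abs_lt.mp hRe
    rcases (hwr0 r).lt_or_gt with hneg | hpos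
    · have hReneg : (W r z).re < 0 := by rw [abs_of_neg hneg] at hRe2; linarith
      have hzim : z.im < 0 := by
        rw [him]; exact div_neg_of_neg_of_pos (mul_neg_of_pos_of_neg hε0 hReneg) hNS
      exact ⟨⟨fun h => absurd h (by linarith), fun h => absurd h (by linarith)⟩, by linarith⟩
    · have hRepos : 0 < (W r z).re := by rw [abs_of_pos hpos] at hRe1; linarith
      have hzim : 0 < z.im := by
        rw [him]; exact div_pos (mul_pos hε0 hRepos) hNS
      exact ⟨⟨fun _ => hpos, fun _ => hzim⟩, by linarith⟩
  have hsimple : ∀ z ∈ Q.roots, Q.rootMultiplicity z = 1 := by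
    intro z hz
    have hzr : Q.IsRoot z := (mem_roots hQ0).mp hz
    have h1 : 0 < Q.rootMultiplicity z := (rootMultiplicity_pos hQ0).mpr hzr
    by_contra hne
    have h2 : 2 ≤ Q.rootMultiplicity z := by omega
    have hQder : Q.derivative = Pc.derivative := by rw [hQ']; simp
    have h3 : 0 < (Polynomial.derivative Q).rootMultiplicity z := by
      rw [derivative_rootMultiplicity_of_root hzr]
      omega
    have h4 : (Polynomial.derivative Q).IsRoot z :=
      (rootMultiplicity_pos (by rw [hQder]; exact hder0)).mp h3
    rw [hQder] at h4
    have h5 := hρle z h4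
    have h6 : ‖Pc.eval z‖ = ε := by rw [(hQroot z).mp hz, hεInorm]
    rw [h6] at h5
    linarith
  have hnodupQ : Q.roots.Nodup := by
    rw [Multiset.nodup_iff_count_le_one]
    intro z
    by_cases hz : z ∈ Q.roots
    · rw [count_roots, hsimple z hz]
    · rw [Multiset.count_eq_zero_of_notMem hz]
      exact zero_le_one
  have hQsplits : Q.Splits := IsAlgClosed.splits Q
  have hQcard : Q.roots.card = m := by rw [splits_iff_card_roots.mp hQsplits]; exact hQdeg
  set A : Finset ℂ := Q.roots.toFinset with hA'
  have hAval : A.val = Q.roots := by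
    rw [hA', Multiset.toFinset_val, Multiset.dedup_eq_self.mpr hnodupQ]
  have hAcard : A.card = m := by rw [Finset.card_def, hAval, hQcard]
  have hAev : ∀ z ∈ A, Pc.eval z = (ε : ℂ) * Complex.I := fun z hz =>
    (hQroot z).mp (Multiset.mem_toFinset.mp hz)
  have hchoice : ∀ z : ℂ, ∃ r : ℝ, z ∈ A → r ∈ T ∧ ‖z - (r : ℂ)‖ < δ := by
    intro z
    by_cases hz : z ∈ A
    · obtain ⟨r, hr, hrd⟩ := hloc z (hAev z hz)
      exact ⟨r, fun _ => ⟨hr, hrd⟩⟩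
    · exact ⟨0, fun h => absurd h hz⟩
  choose f hf using hchoice
  have hfT : ∀ z ∈ A, f z ∈ T := fun z hz => (hf z hz).1
  have hfd : ∀ z ∈ A, ‖z - (f z : ℂ)‖ < δ := fun z hz => (hf z hz).2
  have hsurj : ∀ r ∈ T, ∃ z ∈ A, f z = r := by
    intro r hr
    have hPer : Pc.eval ((r : ℝ) : ℂ) = 0 := by
      have h0 : P.eval r = 0 := isRoot_of_mem_roots (Multiset.mem_toFinset.mp hr)
      have h1 : Pc.eval ((algebraMap ℝ ℂ) r) = algebraMap ℝ ℂ (P.eval r) := by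
        rw [hPc', eval_map, eval₂_at_apply]
      rw [h0, map_zero] at h1
      rw [← h1]
      norm_num
    have hcenter : ‖Q.eval ((r : ℝ) : ℂ)‖ < c * δ ^ m - ε := by
      rw [hQeval, hPer, zero_sub, norm_neg, hεInorm]
      linarith
    have hbound : ∀ z ∈ Metric.sphere ((r : ℝ) : ℂ) δ, c * δ ^ m - ε ≤ ‖Q.eval z‖ := by
      intro z hzs
      have hzd : ‖z - (r : ℂ)‖ = δ := by rwa [Metric.mem_sphere, dist_eq_norm] at hzs
      have hball : ∀ l ∈ T, δ ≤ ‖z - (l : ℂ)‖ := by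
        intro l hl
        by_cases hlr : l = r
        · rw [hlr, hzd]
        · have h3 := hgle l hl r hr hlr
          have h4 : ‖(l:ℂ) - (r:ℂ)‖ ≤ ‖z - (r:ℂ)‖ + ‖z - (l:ℂ)‖ := by
            calc ‖(l:ℂ) - (r:ℂ)‖ = ‖(z - (r:ℂ)) - (z - (l:ℂ))‖ := by congr 1; ring
            _ ≤ ‖z - (r:ℂ)‖ + ‖z - (l:ℂ)‖ := norm_sub_le _ _
          rw [hRnorm, hzd] at h4
          linarith
      have h5 := hprodbound z hball
      have h6 : ‖Pc.eval z‖ - ‖(ε:ℂ) * Complex.I‖ ≤ ‖Q.eval z‖ := by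
        rw [hQeval]
        exact norm_sub_norm_le _ _
      rw [hεInorm] at h6
      linarith
    obtain ⟨z₁, hz₁b, hz₁r⟩ := exists_root_closedBall Q _ δ hδ0 _ hcenter hbound
    have hz₁A : z₁ ∈ A := Multiset.mem_toFinset.mpr ((mem_roots hQ0).mpr hz₁r)
    refine ⟨z₁, hz₁A, ?_⟩
    exact huniq z₁ (f z₁) (hfT z₁ hz₁A) r hr (hfd z₁ hz₁A)
      (by rwa [Metric.mem_closedBall, dist_eq_norm] at hz₁b)
  have hinj : ∀ z1 ∈ A, ∀ z2 ∈ A, f z1 = f z2 → z1 = z2 := by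
    intro z1 h1 z2 h2 heq
    exact Finset.inj_on_of_surj_on_of_card_le (fun z _ => f z) (fun z hz => hfT z hz)
      (fun r hr => by obtain ⟨z, hz, he⟩ := hsurj r hr; exact ⟨z, hz, he⟩)
      (by rw [hAcard, hTcard]) h1 h2 heq
  have hsignA : ∀ z ∈ A, ((0 < z.im ↔ 0 < wr (f z)) ∧ z.im ≠ 0) := fun z hz =>
    hsign z (hAev z hz) (f z) (hfT z hz) (hfd z hz)
  have hcountU : countUpper Q = (T.filter fun r => 0 < wr r).card := by
    have h1 : countUpper Q = (A.filter fun z => 0 < z.im).card := by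
      unfold countUpper
      rw [← hAval, ← Finset.filter_val]
      rfl
    rw [h1]
    apply Finset.card_bij (fun z _ => f z)
    · intro z hz
      obtain ⟨hzA, hzim⟩ := Finset.mem_filter.mp hz
      exact Finset.mem_filter.mpr ⟨hfT z hzA, ((hsignA z hzA).1).mp hzim⟩
    · intro z1 h1' z2 h2' heq
      exact hinj z1 (Finset.mem_filter.mp h1').1 z2 (Finset.mem_filter.mp h2').1 heq
    · intro r hr
      obtain ⟨hrT, hrw⟩ := Finset.mem_filter.mp hr
      obtain ⟨z, hzA, hzf⟩ := hsurj r hrT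
      exact ⟨z, Finset.mem_filter.mpr ⟨hzA, ((hsignA z hzA).1).mpr (by rwa [hzf])⟩, hzf⟩
  have hwr_iff : ∀ r ∈ T, (0 < wr r ↔ Even ((T.filter fun l => r < l).card)) := by
    intro r hr
    have hprodne : ∀ l ∈ T.erase r, r - l ≠ 0 := fun l hl h =>
      (Finset.mem_erase.mp hl).1 (by linarith [sub_eq_zero.mp h])
    have h1 : (0 < wr r) ↔ 0 < ∏ l ∈ T.erase r, (r - l) := by
      have he : wr r = c * ∏ l ∈ T.erase r, (r - l) := rfl
      rw [he]
      constructor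
      · intro h
        rcases (Finset.prod_ne_zero_iff.mpr hprodne).lt_or_gt with h2 | h2
        · nlinarith
        · exact h2
      · intro h
        exact mul_pos hlead h
    rw [h1, prod_pos_iff_even _ _ hprodne]
    have h2 : (T.erase r).filter (fun l => r - l < 0) = T.filter fun l => r < l := by
      ext l
      simp only [Finset.mem_filter, Finset.mem_erase, sub_neg]
      constructor
      · rintro ⟨⟨_, hl⟩, hlt⟩
        exact ⟨hl, hlt⟩
      · rintro ⟨hl, hlt⟩
        exact ⟨⟨ne_of_gt hlt, hl⟩, hlt⟩
    rw [h2]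
  set ord : ℝ → ℕ := fun r => (T.filter fun l => r < l).card with hord'
  have hordlt : ∀ r ∈ T, ord r < m := by
    intro r hr
    have h1 : T.filter (fun l => r < l) ⊂ T := Finset.filter_ssubset.mpr ⟨r, hr, lt_irrefl r⟩
    have h2 := Finset.card_lt_card h1
    rw [hTcard] at h2
    exact h2
  have hordmono : ∀ r1 ∈ T, ∀ r2 ∈ T, r1 < r2 → ord r2 < ord r1 := by
    intro r1 h1 r2 h2 hlt
    apply Finset.card_lt_card
    have hsub : Finset.filter (fun l => r2 < l) T ⊆ Finset.filter (fun l => r1 < l) T := by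
      intro l hl
      rw [Finset.mem_filter] at hl ⊢
      exact ⟨hl.1, lt_trans hlt hl.2⟩
    rw [Finset.ssubset_iff_of_subset hsub]
    exact ⟨r2, Finset.mem_filter.mpr ⟨h2, hlt⟩, by simp⟩
  have hordinj : ∀ r1 ∈ T, ∀ r2 ∈ T, ord r1 = ord r2 → r1 = r2 := by
    intro r1 h1 r2 h2 heq
    by_contra hne
    rcases lt_or_gt_of_ne hne with h | h
    · have := hordmono r1 h1 r2 h2 h
      omega
    · have := hordmono r2 h2 r1 h1 h
      omega
  have himg : T.image ord = Finset.range m := by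
    apply Finset.eq_of_subset_of_card_le
    · intro j hj
      obtain ⟨r, hr, rfl⟩ := Finset.mem_image.mp hj
      exact Finset.mem_range.mpr (hordlt r hr)
    · rw [Finset.card_range, Finset.card_image_of_injOn
        (fun r1 h1 r2 h2 => hordinj r1 h1 r2 h2), hTcard]
  have hfinal : (T.filter fun r => 0 < wr r).card = k := by
    have h1 : (T.filter fun r => 0 < wr r) = (T.filter fun r => Even (ord r)) :=
      Finset.filter_congr fun r hr => hwr_iff r hr
    rw [h1, ← card_range_even' k hk]
    apply Finset.card_bij (fun r _ => ord r)
    · intro r hr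
      obtain ⟨hrT, hre⟩ := Finset.mem_filter.mp hr
      exact Finset.mem_filter.mpr ⟨Finset.mem_range.mpr (by rw [← hm']; exact hordlt r hrT), hre⟩
    · intro r1 h1' r2 h2' heq
      exact hordinj r1 (Finset.mem_filter.mp h1').1 r2 (Finset.mem_filter.mp h2').1 heq
    · intro j hj
      obtain ⟨hjr, hje⟩ := Finset.mem_filter.mp hj
      have hjm : j ∈ T.image ord := by rw [himg]; rw [← hm'] at hjr; exact hjr
      obtain ⟨r, hr, rfl⟩ := Finset.mem_image.mp hjm
      exact ⟨r, Finset.mem_filter.mpr ⟨hr, hje⟩, rfl⟩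
  have hU : countUpper Q = k := by rw [hcountU, hfinal]
  have himne : ∀ z ∈ Q.roots, z.im ≠ 0 := fun z hz =>
    (hsignA z (Multiset.mem_toFinset.mpr hz)).2
  have hcountsum : countUpper Q + countLower Q = m := by
    unfold countUpper countLower
    have h1 := Multiset.filter_add_not (fun z => 0 < z.im) Q.roots
    have h2 : Multiset.filter (fun z => ¬ 0 < z.im) Q.roots
        = Multiset.filter (fun z => z.im < 0) Q.roots := by
      apply Multiset.filter_congr
      intro z hz
      have hzne := himne z hz
      constructor
      · intro h
        rcases lt_trichotomy z.im 0 with h' | h' | h'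
        · exact h'
        · exact absurd h' hzne
        · exact absurd h' h
      · intro h h'
        linarith
    have h3 : Multiset.card Q.roots
        = Multiset.card (Multiset.filter (fun z => 0 < z.im) Q.roots)
          + Multiset.card (Multiset.filter (fun z => ¬ 0 < z.im) Q.roots) := by
      conv_lhs => rw [← h1]
      rw [Multiset.card_add]
    rw [h2] at h3
    omega
  have hL : countLower Q = k - 1 := by omega
  exact ⟨hU, hL, hsimple, hnodupQ⟩



/-- For a real polynomial `P` of odd degree `m = 2k - 1` with positive leading
coefficient and `m` distinct real roots, for all sufficiently small `ε > 0` the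
polynomial `P - iε` has exactly `k` roots in the open upper half-plane and `k - 1`
roots in the open lower half-plane, while `P + iε` has exactly `k - 1` roots in the
upper half-plane and `k` in the lower half-plane, all of them simple. -/
theorem perturbed_roots_odd (P : Polynomial ℝ) (k : ℕ) (hk : 1 ≤ k)
    (hdeg : P.natDegree = 2 * k - 1) (hlead : 0 < P.leadingCoeff)
    (hcard : P.roots.card = 2 * k - 1) (hnodup : P.roots.Nodup) :
    ∃ ε₀ : ℝ, 0 < ε₀ ∧ ∀ ε : ℝ, 0 < ε → ε < ε₀ →
      (countUpper (P.map (algebraMap ℝ ℂ) - Polynomial.C ((ε : ℂ) * Complex.I)) = k ∧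
       countLower (P.map (algebraMap ℝ ℂ) - Polynomial.C ((ε : ℂ) * Complex.I)) = k - 1 ∧
       allSimpleRoots (P.map (algebraMap ℝ ℂ) - Polynomial.C ((ε : ℂ) * Complex.I))) ∧
      (countUpper (P.map (algebraMap ℝ ℂ) + Polynomial.C ((ε : ℂ) * Complex.I)) = k - 1 ∧
       countLower (P.map (algebraMap ℝ ℂ) + Polynomial.C ((ε : ℂ) * Complex.I)) = k ∧
       allSimpleRoots (P.map (algebraMap ℝ ℂ) + Polynomial.C ((ε : ℂ) * Complex.I))) := by
  classical
  obtain ⟨ε₀, hε₀, h⟩ := core P k hk hdeg hlead hcard hnodup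
  refine ⟨ε₀, hε₀, fun ε hε1 hε2 => ?_⟩
  obtain ⟨hU, hL, hS, hN⟩ := h ε hε1 hε2
  have hconj : (P.map (algebraMap ℝ ℂ) - C ((ε : ℂ) * Complex.I)).map (starRingEnd ℂ)
      = P.map (algebraMap ℝ ℂ) + C ((ε : ℂ) * Complex.I) := by
    rw [Polynomial.map_sub, map_C, Polynomial.map_map]
    have h1 : (starRingEnd ℂ).comp (algebraMap ℝ ℂ) = algebraMap ℝ ℂ := by
      ext x
      simp [Complex.conj_ofReal]
    rw [h1]
    have h2 : (starRingEnd ℂ) ((ε : ℂ) * Complex.I) = -((ε : ℂ) * Complex.I) := by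
      rw [map_mul, Complex.conj_I, Complex.conj_ofReal]
      ring
    rw [h2, map_neg, sub_neg_eq_add]
  have hsplitm : (P.map (algebraMap ℝ ℂ) - C ((ε : ℂ) * Complex.I)).Splits :=
    IsAlgClosed.splits _
  have hroots : (P.map (algebraMap ℝ ℂ) + C ((ε : ℂ) * Complex.I)).roots
      = (P.map (algebraMap ℝ ℂ) - C ((ε : ℂ) * Complex.I)).roots.map (starRingEnd ℂ) := by
    rw [← hconj, hsplitm.roots_map _]
  have hUp : countUpper (P.map (algebraMap ℝ ℂ) + C ((ε : ℂ) * Complex.I))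
      = countLower (P.map (algebraMap ℝ ℂ) - C ((ε : ℂ) * Complex.I)) := by
    unfold countUpper countLower
    rw [hroots, Multiset.filter_map, Multiset.card_map]
    congr 1
    apply Multiset.filter_congr
    intro z _
    simp [Function.comp, neg_pos]
  have hLo : countLower (P.map (algebraMap ℝ ℂ) + C ((ε : ℂ) * Complex.I))
      = countUpper (P.map (algebraMap ℝ ℂ) - C ((ε : ℂ) * Complex.I)) := by
    unfold countUpper countLower
    rw [hroots, Multiset.filter_map, Multiset.card_map]
    congr 1
    apply Multiset.filter_congr
    intro z _
    simp [Function.comp]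
  have hNp : (P.map (algebraMap ℝ ℂ) + C ((ε : ℂ) * Complex.I)).roots.Nodup := by
    rw [hroots]
    exact hN.map (starRingEnd ℂ).injective
  have hSp : allSimpleRoots (P.map (algebraMap ℝ ℂ) + C ((ε : ℂ) * Complex.I)) := by
    intro z hz
    rw [← count_roots]
    exact Multiset.count_eq_one_of_mem hNp hz
  exact ⟨⟨hU, hL, hS⟩, ⟨by rw [hUp]; exact hL, by rw [hLo]; exact hU, hSp⟩⟩
end
end

section
/- Let P be a polynomial of degree m ≥ 1 with real coefficients, positive leading coefficient, and m distinct real roots, regarded as a polynomial over ℂ. Then for every ε > 0 (not merely for small ε), the polynomial P − iε has exactly ⌈m/2⌉ roots, counted with multiplicity, in the open upper half-plane ℂ₊ = {z ∈ ℂ : Im z > 0}, exactly ⌊m/2⌋ roots, counted with multiplicity, in the open lower half-plane ℂ₋ = {z ∈ ℂ : Im z < 0}, and no real roots. -/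
open Polynomial

noncomputable section

lemma pow_card_le_prod_real {s : Multiset ℝ} {a : ℝ} (ha : 0 ≤ a)
    (h : ∀ x ∈ s, a ≤ x) : a ^ Multiset.card s ≤ s.prod := by
  induction s using Multiset.induction with
  | empty => simp
  | cons x s ih =>
    rw [Multiset.prod_cons, Multiset.card_cons, pow_succ]
    have hx := h x (Multiset.mem_cons_self x s)
    have hs := ih (fun y hy => h y (Multiset.mem_cons_of_mem hy))
    have hprodnn : (0:ℝ) ≤ s.prod :=
      Multiset.prod_nonneg (fun y hy => le_trans ha (h y (Multiset.mem_cons_of_mem hy)))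
    calc a ^ Multiset.card s * a ≤ s.prod * x := by
          apply mul_le_mul hs hx ha hprodnn
      _ = x * s.prod := mul_comm _ _

lemma abs_eval_eq {q : Polynomial ℂ} (x : ℂ) :
    ‖q.eval x‖
      = ‖q.leadingCoeff‖ * ((q.roots.map (fun z => ‖x - z‖)).prod) := by
  conv_lhs => rw [(IsAlgClosed.splits q).eq_prod_roots]
  rw [eval_mul, eval_C, eval_multiset_prod, Multiset.map_map, norm_mul,
    show ∀ s : Multiset ℂ, ‖s.prod‖ = (s.map (‖·‖)).prod from
      fun s => map_multiset_prod (normHom (α := ℂ)) s,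
    Multiset.map_map]
  simp [Function.comp_def]

lemma pert_ne_zero {q : Polynomial ℂ} {m : ℕ} (hm : 1 ≤ m) (hq : q.natDegree = m) (a : ℂ) :
    (q + C a) ≠ 0 ∧ (q + C a).natDegree = m ∧ (q + C a).leadingCoeff = q.leadingCoeff := by
  have hd : (q + C a).natDegree = m := by rw [natDegree_add_C, hq]
  have hne : q + C a ≠ 0 := by
    intro h; rw [h, natDegree_zero] at hd; omega
  refine ⟨hne, hd, ?_⟩
  rw [leadingCoeff, leadingCoeff, hd, hq, coeff_add, coeff_C, if_neg (by omega)]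
  ring

lemma roots_card_eq {q : Polynomial ℂ} (hq : q ≠ 0) : Multiset.card q.roots = q.natDegree :=
  splits_iff_card_roots.mp (IsAlgClosed.splits q)

lemma exists_root_near {q : Polynomial ℂ} {m : ℕ} (hm : 1 ≤ m) (hq : q.natDegree = m)
    {a : ℂ} {δ : ℝ} (hδ : 0 < δ)
    (ha : ‖a‖ < ‖q.leadingCoeff‖ * δ ^ m) :
    ∀ w ∈ (q + C a).roots, ∃ z ∈ q.roots, dist w z < δ := by
  intro w hw
  have hqne : q ≠ 0 := fun h => by simp [h, natDegree_zero] at hq; omega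
  have hcne : ‖q.leadingCoeff‖ ≠ 0 := by
    simpa using leadingCoeff_ne_zero.mpr hqne
  have hroot : (q + C a).eval w = 0 := (mem_roots'.mp hw).2
  have hev : ‖q.eval w‖ = ‖a‖ := by
    have : q.eval w = -a := by
      have := hroot; rw [eval_add, eval_C] at this; linear_combination this
    rw [this, norm_neg]
  by_contra hno
  push_neg at hno
  have hall : ∀ x ∈ q.roots.map (fun z => ‖w - z‖), δ ≤ x := by
    intro x hx
    obtain ⟨z, hz, rfl⟩ := Multiset.mem_map.mp hx
    have := hno z hz
    rwa [Complex.dist_eq] at this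
  have hprod : δ ^ m ≤ (q.roots.map (fun z => ‖w - z‖)).prod := by
    have := pow_card_le_prod_real hδ.le hall
    rwa [Multiset.card_map, roots_card_eq hqne, hq] at this
  have := abs_eval_eq (q := q) w
  rw [hev] at this
  have hlt : ‖q.leadingCoeff‖ * δ ^ m ≤ ‖a‖ := by
    rw [this]
    have : (0:ℝ) < ‖q.leadingCoeff‖ := lt_of_le_of_ne (by positivity) (Ne.symm hcne)
    nlinarith [hprod]
  linarith

lemma exists_pert_root_near {q : Polynomial ℂ} {m : ℕ} (hm : 1 ≤ m) (hq : q.natDegree = m)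
    {a : ℂ} {δ : ℝ} (hδ : 0 < δ)
    (ha : ‖a‖ < ‖q.leadingCoeff‖ * δ ^ m) :
    ∀ z ∈ q.roots, ∃ w ∈ (q + C a).roots, dist w z < δ := by
  intro z hz
  obtain ⟨hne, hd, hl⟩ := pert_ne_zero hm hq a
  have hqne : q ≠ 0 := fun h => by simp [h, natDegree_zero] at hq; omega
  have hcne : (0:ℝ) < ‖q.leadingCoeff‖ := by
    have := leadingCoeff_ne_zero.mpr hqne
    simpa [norm_pos_iff] using this
  have hev : ‖(q + C a).eval z‖ = ‖a‖ := by
    rw [eval_add, eval_C, (mem_roots'.mp hz).2, zero_add]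
  by_contra hno
  push_neg at hno
  have hall : ∀ x ∈ (q + C a).roots.map (fun w => ‖z - w‖), δ ≤ x := by
    intro x hx
    obtain ⟨w, hw, rfl⟩ := Multiset.mem_map.mp hx
    have := hno w hw
    rw [Complex.dist_eq] at this
    rwa [← norm_neg, neg_sub] at this
  have hprod : δ ^ m ≤ ((q + C a).roots.map (fun w => ‖z - w‖)).prod := by
    have := pow_card_le_prod_real hδ.le hall
    rwa [Multiset.card_map, roots_card_eq hne, hd] at this
  have h2 := abs_eval_eq (q := q + C a) z
  rw [hev, hl] at h2
  have hlt : ‖q.leadingCoeff‖ * δ ^ m ≤ ‖a‖ := by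
    rw [h2]; nlinarith [hprod]
  linarith

def Qt (P : Polynomial ℝ) (t : ℝ) : Polynomial ℂ :=
  P.map (algebraMap ℝ ℂ) - C ((t:ℂ) * Complex.I)

lemma Qt_eq_add (P : Polynomial ℝ) (t : ℝ) :
    Qt P t = P.map (algebraMap ℝ ℂ) + C (-((t:ℂ) * Complex.I)) := by
  rw [Qt, map_neg, sub_eq_add_neg]

lemma Qt_pert (P : Polynomial ℝ) (t₀ t : ℝ) :
    Qt P t = Qt P t₀ + C (((t₀ - t : ℝ) : ℂ) * Complex.I) := by
  simp only [Qt, Complex.ofReal_sub]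
  rw [sub_mul, map_sub]
  ring

section Main

variable {P : Polynomial ℝ} {m : ℕ}
  (hm : 1 ≤ m) (hdeg : P.natDegree = m) (hlead : 0 < P.leadingCoeff)
  (hcard : Multiset.card P.roots = m) (hnodup : P.roots.Nodup)

include hm hdeg

lemma hP0 : P ≠ 0 := fun h => by simp [h] at hdeg; omega

lemma hPc_deg : (P.map (algebraMap ℝ ℂ)).natDegree = m := by
  rw [natDegree_map, hdeg]

lemma hPc_lead : (P.map (algebraMap ℝ ℂ)).leadingCoeff = ((P.leadingCoeff : ℝ) : ℂ) := by
  rw [leadingCoeff_map]; rfl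

lemma hPc_eval (x : ℝ) :
    (P.map (algebraMap ℝ ℂ)).eval (x:ℂ) = ((P.eval x : ℝ) : ℂ) := by
  rw [eval_map, ← Complex.coe_algebraMap, eval₂_at_apply]

lemma hQt_deg (t : ℝ) : (Qt P t).natDegree = m := by
  rw [Qt, natDegree_sub_C, natDegree_map, hdeg]

lemma hQt_ne (t : ℝ) : Qt P t ≠ 0 := fun h => by
  have := hQt_deg hm hdeg (P := P) t
  rw [h, natDegree_zero] at this; omega

lemma hQt_lead (t : ℝ) : (Qt P t).leadingCoeff = ((P.leadingCoeff : ℝ) : ℂ) := by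
  rw [Qt_eq_add]
  rw [(pert_ne_zero hm (hPc_deg hm hdeg) _).2.2, hPc_lead hm hdeg]

lemma hQt_card (t : ℝ) : Multiset.card (Qt P t).roots = m := by
  rw [roots_card_eq (hQt_ne hm hdeg t), hQt_deg hm hdeg]

lemma hQt_root_iff (t : ℝ) (w : ℂ) :
    w ∈ (Qt P t).roots ↔ (P.map (algebraMap ℝ ℂ)).eval w = (t:ℂ) * Complex.I := by
  rw [mem_roots (hQt_ne hm hdeg t), IsRoot, Qt, eval_sub, eval_C, sub_eq_zero]

lemma hQt_noreal (t : ℝ) (ht : t ≠ 0) : ∀ w ∈ (Qt P t).roots, w.im ≠ 0 := by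
  intro w hw him
  have hw' := (hQt_root_iff hm hdeg t w).mp hw
  have : w = ((w.re : ℝ) : ℂ) := by
    apply Complex.ext <;> simp [him]
  rw [this, hPc_eval hm hdeg] at hw'
  have := congrArg Complex.im hw'
  simp at this
  exact ht this.symm

include hcard hnodup in
lemma deriv_real_rooted :
    ∀ w : ℂ, (P.derivative.map (algebraMap ℝ ℂ)).eval w = 0 → w.im = 0 := by
  have hP0' : P ≠ 0 := hP0 hm hdeg
  have hdeg1 : 0 < P.natDegree := by omega
  have hdegD : degree (derivative P) = ((P.natDegree - 1 : ℕ) : WithBot ℕ) :=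
    degree_derivative_eq P hdeg1
  have hDdeg : P.derivative.natDegree = m - 1 := by
    rw [natDegree_eq_of_degree_eq_some hdegD, hdeg]
  have hD0 : P.derivative ≠ 0 := by
    intro h
    rw [h, degree_zero] at hdegD
    exact (by simp : ((P.natDegree - 1 : ℕ) : WithBot ℕ) ≠ ⊥) hdegD.symm
  set l := P.roots.sort (· ≤ ·) with hldef
  have hlen : l.length = m := by rw [Multiset.length_sort, hcard]
  have hlnodup : l.Nodup := by
    have : (l : Multiset ℝ) = P.roots := Multiset.sort_eq _ _
    rw [← Multiset.coe_nodup, this]; exact hnodup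
  have hsort : l.SortedLT :=
    (Multiset.pairwise_sort ..).sortedLE.sortedLT_of_nodup hlnodup
  have hmeml : ∀ (i : ℕ) (h : i < l.length), l.get ⟨i, h⟩ ∈ P.roots := by
    intro i h
    rw [← Multiset.mem_sort (· ≤ ·) (s := P.roots)]
    exact l.get_mem _
  have hrootl : ∀ (i : ℕ) (h : i < l.length), P.eval (l.get ⟨i, h⟩) = 0 := by
    intro i h
    exact (mem_roots'.mp (hmeml i h)).2
  have key : ∀ (i : ℕ) (_ : i + 1 < m), ∃ x : ℝ,
      l.get ⟨i, by omega⟩ < x ∧ x < l.get ⟨i+1, by omega⟩ ∧ P.derivative.eval x = 0 := by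
    intro i hi
    have h1 : i < l.length := by omega
    have h2 : i + 1 < l.length := by omega
    have hab : l.get ⟨i, h1⟩ < l.get ⟨i+1, h2⟩ :=
      hsort.strictMono_get (by exact Fin.mk_lt_mk.mpr (by omega))
    obtain ⟨c, hc, hc'⟩ := exists_deriv_eq_zero hab
      (Polynomial.continuousOn P) (by rw [hrootl i h1, hrootl (i+1) h2])
    refine ⟨c, hc.1, hc.2, ?_⟩
    rwa [Polynomial.deriv] at hc'
  choose! x hx1 hx2 hx3 using key
  have hxmono : ∀ i j : ℕ, i + 1 < m → j + 1 < m → i < j → x i < x j := by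
    intro i j hi hj hij
    have h1 : x i < l.get ⟨i+1, by omega⟩ := hx2 i hi
    have h2 : l.get ⟨j, by omega⟩ < x j := hx1 j hj
    have h3 : l.get ⟨i+1, by omega⟩ ≤ l.get ⟨j, by omega⟩ :=
      hsort.strictMono_get.monotone (by exact Fin.mk_le_mk.mpr (by omega))
    linarith
  have himg : (Finset.range (m-1)).image x ⊆ P.derivative.roots.toFinset := by
    intro y hy
    obtain ⟨i, hi, rfl⟩ := Finset.mem_image.mp hy
    rw [Finset.mem_range] at hi
    rw [Multiset.mem_toFinset]
    exact mem_roots'.mpr ⟨hD0, hx3 i (by omega)⟩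
  have hcard_img : ((Finset.range (m-1)).image x).card = m - 1 := by
    rw [Finset.card_image_of_injOn, Finset.card_range]
    intro i hi j hj hij
    rw [Finset.mem_coe, Finset.mem_range] at hi hj
    by_contra hne
    rcases lt_or_gt_of_ne hne with h | h
    · exact absurd hij (ne_of_lt (hxmono i j (by omega) (by omega) h))
    · exact absurd hij.symm (ne_of_lt (hxmono j i (by omega) (by omega) h))
  have hge : m - 1 ≤ Multiset.card P.derivative.roots := by
    calc m - 1 = ((Finset.range (m-1)).image x).card := hcard_img.symm
      _ ≤ P.derivative.roots.toFinset.card := Finset.card_le_card himg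
      _ ≤ Multiset.card P.derivative.roots := Multiset.toFinset_card_le _
  have hsplits : Splits P.derivative := by
    apply splits_iff_card_roots.mpr
    refine le_antisymm (by rw [hDdeg]; exact le_of_le_of_eq (card_roots' _) hDdeg) ?_
    rw [hDdeg]; exact hge
  intro w hw
  have hmap0 : P.derivative.map (algebraMap ℝ ℂ) ≠ 0 := map_ne_zero hD0
  have hwmem : w ∈ (P.derivative.map (algebraMap ℝ ℂ)).roots := mem_roots'.mpr ⟨hmap0, hw⟩
  rw [hsplits.roots_map (algebraMap ℝ ℂ)] at hwmem
  obtain ⟨r, hr, rfl⟩ := Multiset.mem_map.mp hwmem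
  simp

include hcard hnodup in
lemma hQt_nodup (t : ℝ) (ht : t ≠ 0) : (Qt P t).roots.Nodup := by
  rw [Multiset.nodup_iff_count_le_one]
  by_contra hcon
  push_neg at hcon
  obtain ⟨w, hw⟩ := hcon
  have hwmem : w ∈ (Qt P t).roots := Multiset.count_pos.mp (by omega)
  have hrm : 2 ≤ rootMultiplicity w (Qt P t) := by
    rw [← count_roots]; omega
  have hdvd : (X - C w) ^ 2 ∣ Qt P t :=
    dvd_trans (pow_dvd_pow _ hrm) (pow_rootMultiplicity_dvd _ _)
  obtain ⟨g, hg⟩ := hdvd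
  have hD : (Qt P t).derivative.eval w = 0 := by
    rw [hg]
    simp [derivative_mul, derivative_pow, eval_mul, eval_add, eval_pow, eval_sub,
      eval_X, eval_C, sub_self]
  have hDC : (Qt P t).derivative = P.derivative.map (algebraMap ℝ ℂ) := by
    rw [Qt, derivative_sub, derivative_C, sub_zero, derivative_map]
  rw [hDC] at hD
  have := deriv_real_rooted hm hdeg hcard hnodup w hD
  exact hQt_noreal hm hdeg t ht w hwmem this

end Main

lemma card_even_range (m : ℕ) : ((Finset.range m).filter (fun i => Even i)).card = (m+1)/2 := by
  induction m with
  | zero => simp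
  | succ n ih =>
    rw [Finset.range_add_one, Finset.filter_insert]
    by_cases h : Even n
    · rw [if_pos h, Finset.card_insert_of_notMem (by simp)]
      obtain ⟨k, hk⟩ := h; omega
    · rw [if_neg h]
      rw [Nat.not_even_iff_odd] at h; obtain ⟨k, hk⟩ := h; omega

lemma ball_transfer {F₁ F₂ : Finset ℂ} {δ : ℝ}
    (hcard : F₂.card = F₁.card)
    (hsep : ∀ z ∈ F₁, ∀ z' ∈ F₁, z ≠ z' → 2*δ ≤ dist z z')
    (hnear : ∀ w ∈ F₂, ∃ z ∈ F₁, dist w z < δ)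
    (hsurj : ∀ z ∈ F₁, ∃ w ∈ F₂, dist w z < δ)
    (p q : ℂ → Prop) [DecidablePred p] [DecidablePred q]
    (hpq : ∀ z ∈ F₁, ∀ w ∈ F₂, dist w z < δ → (p w ↔ q z)) :
    (F₂.filter p).card = (F₁.filter q).card := by
  have huniq : ∀ w ∈ F₂, ∃! z, z ∈ F₁ ∧ dist w z < δ := by
    intro w hw
    obtain ⟨z, hz, hd⟩ := hnear w hw
    refine ⟨z, ⟨hz, hd⟩, ?_⟩
    rintro z' ⟨hz', hd'⟩
    by_contra hne
    have h1 := hsep z' hz' z hz hne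
    have h2 : dist z' z ≤ dist w z' + dist w z := by
      rw [dist_comm w z']; exact dist_triangle _ _ _
    linarith
  set f : ∀ w ∈ F₂, ℂ := fun w hw => (huniq w hw).choose with hf
  have hmem : ∀ w hw, f w hw ∈ F₁ := fun w hw => (huniq w hw).choose_spec.1.1
  have hdist : ∀ w hw, dist w (f w hw) < δ := fun w hw => (huniq w hw).choose_spec.1.2
  have hu : ∀ w hw z, z ∈ F₁ → dist w z < δ → f w hw = z := by
    intro w hw z hz hd
    exact ((huniq w hw).choose_spec.2 z ⟨hz, hd⟩).symm
  have hfsurj : ∀ z ∈ F₁, ∃ w, ∃ hw : w ∈ F₂, f w hw = z := by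
    intro z hz
    obtain ⟨w, hw, hd⟩ := hsurj z hz
    exact ⟨w, hw, hu w hw z hz hd⟩
  have hinj := Finset.inj_on_of_surj_on_of_card_le f hmem hfsurj hcard.le
  refine Finset.card_bij (fun w hw => f w (Finset.mem_filter.mp hw).1) ?_ ?_ ?_
  · intro w hw
    obtain ⟨hw2, hpw⟩ := Finset.mem_filter.mp hw
    refine Finset.mem_filter.mpr ⟨hmem w hw2, ?_⟩
    exact (hpq _ (hmem w hw2) w hw2 (hdist w hw2)).mp hpw
  · intro w1 hw1 w2 hw2 heq
    exact hinj (Finset.mem_filter.mp hw1).1 (Finset.mem_filter.mp hw2).1 heq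
  · intro z hz
    obtain ⟨hz1, hqz⟩ := Finset.mem_filter.mp hz
    obtain ⟨w, hw, hfw⟩ := hfsurj z hz1
    have hpw : p w := (hpq z hz1 w hw (hfw ▸ hdist w hw)).mpr hqz
    exact ⟨w, Finset.mem_filter.mpr ⟨hw, hpw⟩, hfw⟩

lemma card_even_range' (m : ℕ) : ((Finset.range m).filter (fun i => Even i)).card = (m+1)/2 := by
  induction m with
  | zero => simp
  | succ n ih =>
    rw [Finset.range_add_one, Finset.filter_insert]
    by_cases h : Even n
    · rw [if_pos h, Finset.card_insert_of_notMem (by simp)]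
      obtain ⟨k, hk⟩ := h; omega
    · rw [if_neg h]
      rw [Nat.not_even_iff_odd] at h; obtain ⟨k, hk⟩ := h; omega

lemma sign_prod_formula {c r : ℝ} (hc : 0 < c) (s : Finset ℝ) (hr : r ∉ s) :
    (0 < c * ∏ x ∈ s, (r - x) ↔ Even ((s.filter (fun x => r < x)).card)) := by
  classical
  set k := (s.filter (fun x => r < x)).card with hk
  have hsplit := Finset.prod_filter_mul_prod_filter_not s (fun x => r < x) (fun x => r - x)
  have hB : 0 < ∏ x ∈ s.filter (fun x => ¬ r < x), (r - x) := by
    apply Finset.prod_pos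
    intro x hx
    obtain ⟨hxs, hxn⟩ := Finset.mem_filter.mp hx
    have hxr : x ≠ r := fun h => hr (h ▸ hxs)
    have : x < r := lt_of_le_of_ne (not_lt.mp hxn) hxr
    linarith
  have hA : 0 < ∏ x ∈ s.filter (fun x => r < x), (x - r) := by
    apply Finset.prod_pos
    intro x hx
    have := (Finset.mem_filter.mp hx).2
    linarith
  have h1 : ∏ x ∈ s.filter (fun x => r < x), (r - x)
      = (-1:ℝ)^k * ∏ x ∈ s.filter (fun x => r < x), (x - r) := by
    rw [hk, ← Finset.prod_const, ← Finset.prod_mul_distrib]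
    exact Finset.prod_congr rfl (fun x _ => by ring)
  rw [← hsplit, h1]
  rcases Nat.even_or_odd k with he | ho
  · rw [he.neg_one_pow]
    constructor
    · intro _; exact he
    · intro _; nlinarith [mul_pos (mul_pos hc hA) hB]
  · rw [ho.neg_one_pow]
    constructor
    · intro h; nlinarith [mul_pos (mul_pos hc hA) hB]
    · intro h; exact absurd h (Nat.not_even_iff_odd.mpr ho)

lemma count_even_gt (F : Finset ℝ) (m : ℕ) (hc : F.card = m) :
    (F.filter (fun r => Even ((F.filter fun s => r < s).card))).card = (m+1)/2 := by
  classical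
  rcases Nat.eq_zero_or_pos m with rfl | hm
  · rw [Finset.card_eq_zero] at hc
    subst hc; simp
  set n := fun r => (F.filter fun s => r < s).card with hn
  have hanti : ∀ r ∈ F, ∀ r' ∈ F, r < r' → n r' < n r := by
    intro r hr r' hr' hlt
    apply Finset.card_lt_card
    rw [Finset.ssubset_iff_of_subset]
    · exact ⟨r', Finset.mem_filter.mpr ⟨hr', hlt⟩, fun hmem => (lt_irrefl r' (Finset.mem_filter.mp hmem).2)⟩
    · intro y hy
      obtain ⟨hys, hy2⟩ := Finset.mem_filter.mp hy
      exact Finset.mem_filter.mpr ⟨hys, lt_trans hlt hy2⟩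
  have hinj : Set.InjOn n F := by
    intro r hr r' hr' heq
    by_contra hne
    rcases lt_or_gt_of_ne hne with h | h
    · exact absurd heq (ne_of_gt (hanti r hr r' hr' h))
    · exact absurd heq (ne_of_lt (hanti r' hr' r hr h))
  have hlt : ∀ r ∈ F, n r < m := by
    intro r hr
    have hsub : F.filter (fun s => r < s) ⊆ F.erase r := by
      intro y hy
      obtain ⟨hys, hy2⟩ := Finset.mem_filter.mp hy
      exact Finset.mem_erase.mpr ⟨ne_of_gt hy2, hys⟩
    have := Finset.card_le_card hsub
    rw [Finset.card_erase_of_mem hr, hc] at this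
    simp only [hn]
    omega
  have himg : F.image n = Finset.range m := by
    apply Finset.eq_of_subset_of_card_le
    · intro y hy
      obtain ⟨r, hr, rfl⟩ := Finset.mem_image.mp hy
      exact Finset.mem_range.mpr (hlt r hr)
    · rw [Finset.card_range, Finset.card_image_of_injOn hinj, hc]
  have := card_even_range' m
  rw [← this]
  apply Finset.card_bij (fun r _ => n r)
  · intro r hr
    obtain ⟨hrF, hre⟩ := Finset.mem_filter.mp hr
    exact Finset.mem_filter.mpr ⟨Finset.mem_range.mpr (hlt r hrF), hre⟩
  · intro r hr r' hr' heq
    exact hinj (Finset.mem_filter.mp hr).1 (Finset.mem_filter.mp hr').1 heq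
  · intro j hj
    obtain ⟨hjr, hje⟩ := Finset.mem_filter.mp hj
    have : j ∈ F.image n := himg ▸ hjr
    obtain ⟨r, hr, rfl⟩ := Finset.mem_image.mp this
    exact ⟨r, Finset.mem_filter.mpr ⟨hr, hje⟩, rfl⟩

lemma eval_map_real (g : Polynomial ℝ) (x : ℝ) :
    (g.map (algebraMap ℝ ℂ)).eval (x:ℂ) = ((g.eval x : ℝ) : ℂ) := by
  rw [eval_map, ← Complex.coe_algebraMap, eval₂_at_apply]

lemma exists_sep (F : Finset ℂ) : ∃ δ > 0, ∀ z ∈ F, ∀ z' ∈ F, z ≠ z' → 2*δ ≤ dist z z' := by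
  by_cases h : F.offDiag.Nonempty
  · refine ⟨(F.offDiag.inf' h fun p => dist p.1 p.2)/2, ?_, ?_⟩
    · have hpos : ∀ p ∈ F.offDiag, 0 < dist p.1 p.2 := fun p hp =>
        dist_pos.mpr (Finset.mem_offDiag.mp hp).2.2
      have := (Finset.lt_inf'_iff h (f := fun p => dist p.1 p.2) (a := 0)).mpr hpos
      linarith
    · intro z hz z' hz' hne
      have hp : (z, z') ∈ F.offDiag := Finset.mem_offDiag.mpr ⟨hz, hz', hne⟩
      have := Finset.inf'_le (fun p => dist p.1 p.2) hp
      linarith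
  · refine ⟨1, one_pos, fun z hz z' hz' hne => ?_⟩
    exact absurd (Finset.mem_offDiag.mpr ⟨hz, hz', hne⟩) (fun hp => h ⟨(z, z'), hp⟩)

section Main2

variable {P : Polynomial ℝ} {m : ℕ}
  (hm : 1 ≤ m) (hdeg : P.natDegree = m) (hlead : 0 < P.leadingCoeff)
  (hcard : Multiset.card P.roots = m) (hnodup : P.roots.Nodup)

include hdeg hcard in
lemma hPsplits : Splits P :=
  splits_iff_card_roots.mpr (by rw [hcard, hdeg])

include hdeg hcard in
lemma hv_eq (r : ℝ) (hr : r ∈ P.roots) :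
    P /ₘ (X - C r) = C P.leadingCoeff * ((P.roots.erase r).map fun s => X - C s).prod := by
  have hrt : IsRoot P r := (mem_roots'.mp hr).2
  have h2 : (X - C r) * (P /ₘ (X - C r)) = P := mul_divByMonic_eq_iff_isRoot.mpr hrt
  have h1 : (X - C r) * (C P.leadingCoeff * ((P.roots.erase r).map fun s => X - C s).prod)
      = P := by
    have hre : P.roots = r ::ₘ P.roots.erase r := (Multiset.cons_erase hr).symm
    conv_rhs => rw [(hPsplits hdeg hcard).eq_prod_roots, hre,
      Multiset.map_cons, Multiset.prod_cons]
    ring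
  exact mul_left_cancel₀ (X_sub_C_ne_zero r) (h2.trans h1.symm)

include hdeg hcard hnodup in
lemma hv_val (r : ℝ) (hr : r ∈ P.roots) :
    (P /ₘ (X - C r)).eval r
      = P.leadingCoeff * ∏ x ∈ (Finset.mk P.roots hnodup).erase r, (r - x) := by
  rw [hv_eq hdeg hcard r hr, eval_mul, eval_C, eval_multiset_prod, Multiset.map_map]
  congr 1
  rw [Finset.prod, Finset.erase_val]
  simp [Function.comp_def]

include hdeg hcard hnodup in
lemma hv_ne (r : ℝ) (hr : r ∈ P.roots) (hlead' : 0 < P.leadingCoeff) :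
    (P /ₘ (X - C r)).eval r ≠ 0 := by
  rw [hv_val hdeg hcard hnodup r hr]
  apply mul_ne_zero (ne_of_gt hlead')
  rw [Finset.prod_ne_zero_iff]
  intro x hx
  have : x ≠ r := (Finset.mem_erase.mp hx).1
  intro h
  exact this (by linarith [sub_eq_zero.mp h])

include hdeg hcard hnodup hlead in
lemma hv_pos_iff (r : ℝ) (hr : r ∈ P.roots) :
    (0 < (P /ₘ (X - C r)).eval r
      ↔ Even (((Finset.mk P.roots hnodup).filter fun s => r < s).card)) := by
  rw [hv_val hdeg hcard hnodup r hr,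
    sign_prod_formula hlead _ (Finset.notMem_erase r _)]
  congr! 2
  rw [Finset.filter_erase, Finset.erase_eq_of_notMem]
  intro hmem
  exact lt_irrefl r (Finset.mem_filter.mp hmem).2

include hdeg hcard in
lemma hG_eq (r : ℝ) :
    ((P.map (algebraMap ℝ ℂ)) /ₘ (X - C ((r:ℝ):ℂ)))
      = (P /ₘ (X - C r)).map (algebraMap ℝ ℂ) := by
  rw [map_divByMonic _ (monic_X_sub_C r)]
  simp

end Main2

lemma sign_stable {a b : ℝ} (h : |a - b| < |b|) : (0 < a ↔ 0 < b) := by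
  rcases abs_cases b with ⟨hb, hb'⟩ | ⟨hb, hb'⟩ <;>
    rcases abs_cases (a - b) with ⟨h1, h2⟩ | ⟨h1, h2⟩ <;>
    constructor <;> intro hx <;> linarith

section Main3

variable {P : Polynomial ℝ} {m : ℕ}
  (hm : 1 ≤ m) (hdeg : P.natDegree = m) (hlead : 0 < P.leadingCoeff)
  (hcard : Multiset.card P.roots = m) (hnodup : P.roots.Nodup)

include hm hdeg hlead hcard hnodup in
lemma base_case : ∃ t₁ > 0, ∀ t : ℝ, 0 < t → t < t₁ →
    Multiset.card ((Qt P t).roots.filter fun z => 0 < z.im) = (m+1)/2 := by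
  have hP0' : P ≠ 0 := hP0 hm hdeg
  have hPcroots : (P.map (algebraMap ℝ ℂ)).roots = P.roots.map (fun r : ℝ => (r:ℂ)) :=
    (hPsplits hdeg hcard).roots_map _
  have hPcnodup : (P.map (algebraMap ℝ ℂ)).roots.Nodup := by
    rw [hPcroots]; exact hnodup.map Complex.ofReal_injective
  set F₁ : Finset ℂ := ⟨(P.map (algebraMap ℝ ℂ)).roots, hPcnodup⟩ with hF₁
  have hF₁card : F₁.card = m := by
    show Multiset.card (P.map (algebraMap ℝ ℂ)).roots = m
    rw [roots_card_eq (map_ne_zero hP0'), natDegree_map, hdeg]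
  have hF₁mem : ∀ z ∈ F₁, ∃ r, r ∈ P.roots ∧ (r:ℂ) = z := by
    intro z hz
    have : z ∈ P.roots.map (fun r : ℝ => (r:ℂ)) := by rw [← hPcroots]; exact hz
    obtain ⟨r, hr, hrz⟩ := Multiset.mem_map.mp this
    exact ⟨r, hr, hrz⟩
  have hvne : ∀ r ∈ P.roots, (P /ₘ (X - C r)).eval r ≠ 0 := fun r hr =>
    hv_ne hdeg hcard hnodup r hr hlead
  have hGval : ∀ r : ℝ, ((P.map (algebraMap ℝ ℂ)) /ₘ (X - C ((r:ℝ):ℂ))).eval ((r:ℝ):ℂ)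
      = (((P /ₘ (X - C r)).eval r : ℝ) : ℂ) := by
    intro r
    rw [hG_eq hdeg hcard r, eval_map_real]
  have hcont : ∀ r ∈ P.roots, ∃ d > 0, ∀ w : ℂ, dist w ((r:ℝ):ℂ) < d →
      ‖((P.map (algebraMap ℝ ℂ)) /ₘ (X - C ((r:ℝ):ℂ))).eval w
        - (((P /ₘ (X - C r)).eval r : ℝ) : ℂ)‖ < |(P /ₘ (X - C r)).eval r| := by
    intro r hr
    have hcontG : Continuous fun w : ℂ => ((P.map (algebraMap ℝ ℂ)) /ₘ (X - C ((r:ℝ):ℂ))).eval w :=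
      Polynomial.continuous _
    obtain ⟨d, hd, hball⟩ := Metric.continuousAt_iff.mp hcontG.continuousAt
      (|(P /ₘ (X - C r)).eval r|) (abs_pos.mpr (hvne r hr))
    refine ⟨d, hd, fun w hw => ?_⟩
    have := hball hw
    rwa [Complex.dist_eq, hGval r] at this
  choose! d hd hdball using hcont
  obtain ⟨δ₂, hδ₂, hsep⟩ := exists_sep F₁
  set F₀ : Finset ℝ := ⟨P.roots, hnodup⟩ with hF₀
  have hF₀card : F₀.card = m := hcard
  have hF₀ne : F₀.Nonempty := by
    rw [← Finset.card_pos, hF₀card]; omega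
  set δ₁ := F₀.inf' hF₀ne d with hδ₁def
  have hδ₁ : 0 < δ₁ := by
    rw [hδ₁def, Finset.lt_inf'_iff]
    intro r hr
    exact hd r hr
  set δ := min δ₁ δ₂ with hδdef
  have hδ : 0 < δ := lt_min hδ₁ hδ₂
  refine ⟨P.leadingCoeff * δ^m, by positivity, ?_⟩
  intro t ht htlt
  have hqa : Qt P t = P.map (algebraMap ℝ ℂ) + C (-((t:ℂ) * Complex.I)) := Qt_eq_add P t
  have habs : ‖-((t:ℂ) * Complex.I)‖ = t := by
    rw [norm_neg, norm_mul, Complex.norm_I, mul_one, Complex.norm_real, Real.norm_eq_abs, abs_of_pos ht]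
  have hlc : ‖(P.map (algebraMap ℝ ℂ)).leadingCoeff‖ = P.leadingCoeff := by
    rw [hPc_lead hm hdeg, Complex.norm_real, Real.norm_eq_abs, abs_of_pos hlead]
  have hasmall : ‖-((t:ℂ) * Complex.I)‖
      < ‖(P.map (algebraMap ℝ ℂ)).leadingCoeff‖ * δ^m := by
    rw [habs, hlc]; exact htlt
  have hnear := exists_root_near hm (hPc_deg hm hdeg) hδ hasmall
  have hsurj := exists_pert_root_near hm (hPc_deg hm hdeg) hδ hasmall
  rw [← hqa] at hnear hsurj
  have hndt : (Qt P t).roots.Nodup := hQt_nodup hm hdeg hcard hnodup t (ne_of_gt ht)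
  set F₂ : Finset ℂ := ⟨(Qt P t).roots, hndt⟩ with hF₂
  have hF₂card : F₂.card = m := hQt_card hm hdeg t
  have htrans := ball_transfer (F₁ := F₁) (F₂ := F₂) (δ := δ)
    (by rw [hF₁card, hF₂card])
    (by intro z hz z' hz' hne
        have := hsep z hz z' hz' hne
        have hle : δ ≤ δ₂ := min_le_right _ _
        linarith)
    (by intro w hw
        obtain ⟨z, hz1, hz2⟩ := hnear w (Finset.mem_mk.mp hw)
        exact ⟨z, Finset.mem_mk.mpr hz1, hz2⟩)
    (by intro z hz
        obtain ⟨w, hw1, hw2⟩ := hsurj z (Finset.mem_mk.mp hz)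
        exact ⟨w, Finset.mem_mk.mpr hw1, hw2⟩)
    (fun z => 0 < z.im)
    (fun z => 0 < (((P.map (algebraMap ℝ ℂ)) /ₘ (X - C z)).eval z).re)
    ?_
  · -- conclude the count
    have h1 : Multiset.card ((Qt P t).roots.filter fun z => 0 < z.im)
        = (F₂.filter fun z => 0 < z.im).card := rfl
    rw [h1, htrans]
    -- transfer F₁-count to F₀-count
    have h2 : (F₁.filter fun z => 0 < (((P.map (algebraMap ℝ ℂ)) /ₘ (X - C z)).eval z).re).card
        = (F₀.filter fun r => 0 < (P /ₘ (X - C r)).eval r).card := by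
      symm
      apply Finset.card_bij (fun r _ => ((r:ℝ):ℂ))
      · intro r hr
        obtain ⟨hrF, hrv⟩ := Finset.mem_filter.mp hr
        refine Finset.mem_filter.mpr ⟨?_, ?_⟩
        · show ((r:ℝ):ℂ) ∈ (P.map (algebraMap ℝ ℂ)).roots
          rw [hPcroots]
          exact Multiset.mem_map_of_mem _ hrF
        · rw [hGval r]
          simpa using hrv
      · intro r hr r' hr' heq
        exact Complex.ofReal_injective heq
      · intro z hz
        obtain ⟨hzF, hzv⟩ := Finset.mem_filter.mp hz
        obtain ⟨r, hr, rfl⟩ := hF₁mem z hzF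
        refine ⟨r, Finset.mem_filter.mpr ⟨hr, ?_⟩, rfl⟩
        rw [hGval r] at hzv
        simpa using hzv
    rw [h2]
    have h3 : (F₀.filter fun r => 0 < (P /ₘ (X - C r)).eval r)
        = (F₀.filter fun r => Even ((F₀.filter fun s => r < s).card)) := by
      apply Finset.filter_congr
      intro r hr
      simpa using hv_pos_iff hdeg hlead hcard hnodup r hr
    rw [h3]
    exact count_even_gt F₀ m hF₀card
  · -- hpq
    intro z hz w hw hdist
    obtain ⟨r, hr, rfl⟩ := hF₁mem z hz
    have hwroot : (P.map (algebraMap ℝ ℂ)).eval w = (t:ℂ) * Complex.I :=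
      (hQt_root_iff hm hdeg t w).mp hw
    have hfact : (X - C ((r:ℝ):ℂ)) * ((P.map (algebraMap ℝ ℂ)) /ₘ (X - C ((r:ℝ):ℂ)))
        = P.map (algebraMap ℝ ℂ) := by
      apply mul_divByMonic_eq_iff_isRoot.mpr
      show (P.map (algebraMap ℝ ℂ)).eval ((r:ℝ):ℂ) = 0
      rw [eval_map_real]
      rw [(mem_roots'.mp hr).2]
      simp
    set g := ((P.map (algebraMap ℝ ℂ)) /ₘ (X - C ((r:ℝ):ℂ))).eval w with hg
    set vr := (P /ₘ (X - C r)).eval r with hvr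
    have hball : ‖g - ((vr:ℝ):ℂ)‖ < |vr| := by
      apply hdball r hr w
      calc dist w ((r:ℝ):ℂ) < δ := hdist
        _ ≤ δ₁ := min_le_left _ _
        _ ≤ d r := by exact Finset.inf'_le d hr
    have hsign : (0 < g.re ↔ 0 < vr) := by
      apply sign_stable
      calc |g.re - vr| ≤ ‖g - ((vr:ℝ):ℂ)‖ := by
            have := Complex.abs_re_le_norm (g - ((vr:ℝ):ℂ))
            simpa using this
        _ < |vr| := hball
    have hgne : g ≠ 0 := by
      intro h0
      rw [h0, zero_sub, norm_neg, Complex.norm_real, Real.norm_eq_abs] at hball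
      exact lt_irrefl _ hball
    have hwr : (w - ((r:ℝ):ℂ)) * g = (t:ℂ) * Complex.I := by
      have h5 := congrArg (fun p : Polynomial ℂ => p.eval w) hfact
      simp only [eval_mul, eval_sub, eval_X, eval_C] at h5
      rw [← hg] at h5
      rw [h5, hwroot]
    have hns : 0 < Complex.normSq g := Complex.normSq_pos.mpr hgne
    have him : w.im = t * g.re / Complex.normSq g := by
      have hww : w - ((r:ℝ):ℂ) = (t:ℂ) * Complex.I / g := by
        rw [eq_div_iff hgne]; exact hwr
      have h6 : (w - ((r:ℝ):ℂ)).im = w.im := by simp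
      rw [← h6, hww, Complex.div_im]
      simp [Complex.mul_re, Complex.mul_im]
    show (0 < w.im ↔ 0 < (((P.map (algebraMap ℝ ℂ)) /ₘ (X - C ((r:ℝ):ℂ))).eval ((r:ℝ):ℂ)).re)
    rw [hGval r]
    simp only [Complex.ofReal_re]
    rw [him]
    constructor
    · intro hpos
      apply hsign.mp
      by_contra hng
      push_neg at hng
      have h7 : t * g.re ≤ 0 := mul_nonpos_of_nonneg_of_nonpos ht.le hng
      have h8 := div_nonpos_iff.mpr (Or.inr ⟨h7, hns.le⟩)
      linarith
    · intro hv
      exact div_pos (mul_pos ht (hsign.mpr hv)) hns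

include hm hdeg hlead hcard hnodup in
lemma local_const (t₀ : ℝ) (ht₀ : 0 < t₀) : ∃ η > 0, ∀ t : ℝ, 0 < t → |t - t₀| < η →
    Multiset.card ((Qt P t).roots.filter fun z => 0 < z.im)
      = Multiset.card ((Qt P t₀).roots.filter fun z => 0 < z.im) := by
  have hnd₀ : (Qt P t₀).roots.Nodup := hQt_nodup hm hdeg hcard hnodup t₀ (ne_of_gt ht₀)
  set F₁ : Finset ℂ := ⟨(Qt P t₀).roots, hnd₀⟩ with hF₁
  have hF₁card : F₁.card = m := hQt_card hm hdeg t₀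
  have hF₁ne : F₁.Nonempty := by rw [← Finset.card_pos, hF₁card]; omega
  obtain ⟨δ₂, hδ₂, hsep⟩ := exists_sep F₁
  set δ₁ := F₁.inf' hF₁ne (fun z => |z.im|) with hδ₁def
  have hδ₁ : 0 < δ₁ := by
    rw [hδ₁def, Finset.lt_inf'_iff]
    intro z hz
    exact abs_pos.mpr (hQt_noreal hm hdeg t₀ (ne_of_gt ht₀) z hz)
  set δ := min δ₁ δ₂ with hδdef
  have hδ : 0 < δ := lt_min hδ₁ hδ₂
  refine ⟨P.leadingCoeff * δ^m, by positivity, ?_⟩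
  intro t ht htlt
  have hpert : Qt P t = Qt P t₀ + C (((t₀ - t : ℝ):ℂ) * Complex.I) := Qt_pert P t₀ t
  have habs : ‖((t₀ - t : ℝ):ℂ) * Complex.I‖ = |t - t₀| := by
    rw [norm_mul, Complex.norm_I, mul_one, Complex.norm_real, Real.norm_eq_abs, abs_sub_comm]
  have hasmall : ‖((t₀ - t : ℝ):ℂ) * Complex.I‖
      < ‖(Qt P t₀).leadingCoeff‖ * δ^m := by
    rw [habs, hQt_lead hm hdeg, Complex.norm_real, Real.norm_eq_abs, abs_of_pos hlead]
    exact htlt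
  have hnear := exists_root_near hm (hQt_deg hm hdeg t₀) hδ hasmall
  have hsurj := exists_pert_root_near hm (hQt_deg hm hdeg t₀) hδ hasmall
  rw [← hpert] at hnear hsurj
  have hndt : (Qt P t).roots.Nodup := hQt_nodup hm hdeg hcard hnodup t (ne_of_gt ht)
  set F₂ : Finset ℂ := ⟨(Qt P t).roots, hndt⟩ with hF₂
  have hF₂card : F₂.card = m := hQt_card hm hdeg t
  have htrans := ball_transfer (F₁ := F₁) (F₂ := F₂) (δ := δ)
    (by rw [hF₁card, hF₂card])
    (by intro z hz z' hz' hne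
        have := hsep z hz z' hz' hne
        have hle : δ ≤ δ₂ := min_le_right _ _
        linarith)
    (by intro w hw
        obtain ⟨z, hz1, hz2⟩ := hnear w (Finset.mem_mk.mp hw)
        exact ⟨z, Finset.mem_mk.mpr hz1, hz2⟩)
    (by intro z hz
        obtain ⟨w, hw1, hw2⟩ := hsurj z (Finset.mem_mk.mp hz)
        exact ⟨w, Finset.mem_mk.mpr hw1, hw2⟩)
    (fun z => 0 < z.im)
    (fun z => 0 < z.im)
    ?_
  · exact htrans
  · intro z hz w _ hdist
    have him : |w.im - z.im| ≤ dist w z := by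
      rw [Complex.dist_eq]
      have := Complex.abs_im_le_norm (w - z)
      simpa using this
    have hzim : δ ≤ |z.im| := le_trans (min_le_left _ _) (Finset.inf'_le _ hz)
    exact sign_stable (by linarith)

include hm hdeg hlead hcard hnodup in
lemma upper_count_all (t : ℝ) (ht : 0 < t) :
    Multiset.card ((Qt P t).roots.filter fun z => 0 < z.im) = (m+1)/2 := by
  obtain ⟨t₁, ht₁, hb⟩ := base_case hm hdeg hlead hcard hnodup
  set u : ℝ → ℕ := fun s => Multiset.card ((Qt P s).roots.filter fun z => 0 < z.im) with hu
  show u t = (m+1)/2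
  by_contra hne
  set S : Set ℝ := {s | 0 < s ∧ u s = (m+1)/2} with hS
  set T : Set ℝ := {s | 0 < s ∧ u s ≠ (m+1)/2} with hT
  have hopen : ∀ s₀ : ℝ, 0 < s₀ → ∃ η > 0, ∀ s : ℝ, |s - s₀| < η → (0 < s ∧ u s = u s₀) := by
    intro s₀ hs₀
    obtain ⟨η, hη, hloc⟩ := local_const hm hdeg hlead hcard hnodup s₀ hs₀
    refine ⟨min η s₀, lt_min hη hs₀, ?_⟩
    intro s hs
    have h1 : |s - s₀| < η := lt_of_lt_of_le hs (min_le_left _ _)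
    have h2 : |s - s₀| < s₀ := lt_of_lt_of_le hs (min_le_right _ _)
    have hspos : 0 < s := by
      rcases abs_cases (s - s₀) with ⟨h3, h4⟩ | ⟨h3, h4⟩ <;> linarith
    exact ⟨hspos, hloc s hspos h1⟩
  have hSopen : IsOpen S := by
    rw [Metric.isOpen_iff]
    intro s₀ hs₀
    obtain ⟨hpos, hval⟩ := hs₀
    obtain ⟨η, hη, hprop⟩ := hopen s₀ hpos
    refine ⟨η, hη, ?_⟩
    intro s hs
    rw [Metric.mem_ball, Real.dist_eq] at hs
    obtain ⟨h1, h2⟩ := hprop s hs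
    exact ⟨h1, h2.trans hval⟩
  have hTopen : IsOpen T := by
    rw [Metric.isOpen_iff]
    intro s₀ hs₀
    obtain ⟨hpos, hval⟩ := hs₀
    obtain ⟨η, hη, hprop⟩ := hopen s₀ hpos
    refine ⟨η, hη, ?_⟩
    intro s hs
    rw [Metric.mem_ball, Real.dist_eq] at hs
    obtain ⟨h1, h2⟩ := hprop s hs
    exact ⟨h1, h2 ▸ hval⟩
  have hsub : Set.Ioi (0:ℝ) ⊆ S ∪ T := by
    intro s hs
    rw [Set.mem_Ioi] at hs
    by_cases h : u s = (m+1)/2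
    · exact Or.inl ⟨hs, h⟩
    · exact Or.inr ⟨hs, h⟩
  have h1 : (Set.Ioi (0:ℝ) ∩ S).Nonempty := by
    refine ⟨t₁/2, by simp [Set.mem_Ioi]; linarith, by constructor; linarith; exact hb (t₁/2) (by linarith) (by linarith)⟩
  have h2 : (Set.Ioi (0:ℝ) ∩ T).Nonempty := ⟨t, Set.mem_Ioi.mpr ht, ht, hne⟩
  obtain ⟨x, hxI, hxS, hxT⟩ := isPreconnected_Ioi S T hSopen hTopen hsub h1 h2
  exact hxT.2 hxS.2

end Main3

/-- For a real polynomial `P` of degree `m ≥ 1` with positive leading coefficient and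
`m` distinct real roots, for every `ε > 0` the polynomial `P - iε` has exactly
`⌈m/2⌉` roots (with multiplicity) in the open upper half-plane, exactly `⌊m/2⌋` roots
in the open lower half-plane, and no real roots. -/
theorem perturbed_roots_global (P : Polynomial ℝ) (m : ℕ) (hm : 1 ≤ m)
    (hdeg : P.natDegree = m) (hlead : 0 < P.leadingCoeff)
    (hcard : P.roots.card = m) (hnodup : P.roots.Nodup)
    (ε : ℝ) (hε : 0 < ε) :
    countUpper (P.map (algebraMap ℝ ℂ) - Polynomial.C ((ε : ℂ) * Complex.I)) = (m + 1) / 2 ∧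
    countLower (P.map (algebraMap ℝ ℂ) - Polynomial.C ((ε : ℂ) * Complex.I)) = m / 2 ∧
    ∀ z ∈ (P.map (algebraMap ℝ ℂ) - Polynomial.C ((ε : ℂ) * Complex.I)).roots,
      z.im ≠ 0 := by
  have hQ : P.map (algebraMap ℝ ℂ) - Polynomial.C ((ε : ℂ) * Complex.I) = Qt P ε := rfl
  have hup : Multiset.card ((Qt P ε).roots.filter fun z => 0 < z.im) = (m+1)/2 :=
    upper_count_all hm hdeg hlead hcard hnodup ε hε
  have hnoreal := hQt_noreal hm hdeg ε (ne_of_gt hε)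
  refine ⟨by rw [countUpper, hQ]; exact hup, ?_, by rw [hQ]; exact hnoreal⟩
  rw [countLower, hQ]
  have htotal : Multiset.card (Qt P ε).roots = m := hQt_card hm hdeg ε
  have hsplit := Multiset.filter_add_not (fun z : ℂ => 0 < z.im) (Qt P ε).roots
  have hcards := congrArg Multiset.card hsplit
  rw [Multiset.card_add] at hcards
  have heq : (Qt P ε).roots.filter (fun z => ¬ 0 < z.im)
      = (Qt P ε).roots.filter (fun z => z.im < 0) := by
    apply Multiset.filter_congr
    intro z hz
    constructor
    · intro h
      exact lt_of_le_of_ne (not_lt.mp h) (hnoreal z hz)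
    · intro h
      exact not_lt.mpr h.le
  rw [← heq]
  omega
end
end
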